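/- Let A = (a1,a2), B = (b1,b2), C = (c1,c2) be points in Z^2 such that the set Ω = {(x,y) ∈ Z^2 : a1 ≤ x ≤ b1, a2 ≤ y ≤ c2, b2 - b1 ≤ y - x ≤ c2 - c1} is nonempty. Then for every X ∈ Z^2, d(A,X) + d(B,X) + d(C,X) ≥ (-a1 - a2 + 2b1 - b2 - c1 + 2c2)/3, with equality if and only if X ∈ Ω, where d is the asymmetric distance on the directed lattice graph Γ. -/

import Mathlib

/-- The forward steps of the directed graph `Γ` on `ℤ × ℤ`:
from `(x,y)` there are edges to `(x+1,y)`, `(x,y+1)`, `(x-1,y-1)`. -/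
def fwdSteps : List (ℤ × ℤ) := [(1, 0), (0, 1), (-1, -1)]

/-- A step of a path: an edge traversed either forwards or backwards. -/
def IsStep (s : ℤ × ℤ) : Prop := s ∈ fwdSteps ∨ -s ∈ fwdSteps

/-- The cost of a step: `1/3` forwards, `2/3` backwards. -/
noncomputable def stepCost (s : ℤ × ℤ) : ℝ :=
  if s ∈ fwdSteps then 1/3 else 2/3

/-- The length of a path, given as its list of steps. -/
noncomputable def pathLen (l : List (ℤ × ℤ)) : ℝ := (l.map stepCost).sum

/-- The set of lengths of paths from `a` to `b` in `Γ`. -/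
def pathLengths (a b : ℤ × ℤ) : Set ℝ :=
  {c | ∃ l : List (ℤ × ℤ), (∀ s ∈ l, IsStep s) ∧ a + l.sum = b ∧ pathLen l = c}

/-- The asymmetric distance on `Γ`: the infimum (in fact minimum) of path lengths. -/
noncomputable def latticeDist (a b : ℤ × ℤ) : ℝ := sInf (pathLengths a b)

/-!
The distance is `d(a, b) = g(b - a) / 3` for the gauge `g(x, y) = max (x + y) (y - 2x) (x - 2y)`:
`g` is subadditive and equals three times the cost of each step, so it bounds every path from below,
and a path made of forward steps only attains it. Choosing the term `x + y` of `g(X - A)`,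
`y - 2x` of `g(X - B)` and `x - 2y` of `g(X - C)` makes the `X`-dependence cancel, which gives the
lower bound; equality holds exactly when each gauge is attained at the chosen term, and these six
linear inequalities are the ones defining `Ω`.
-/

def latticeGauge (v : ℤ × ℤ) : ℤ := max (v.1 + v.2) (max (v.2 - 2 * v.1) (v.1 - 2 * v.2))

lemma latticeGauge_zero : latticeGauge 0 = 0 := by
  simp [latticeGauge]

lemma latticeGauge_add_le (u v : ℤ × ℤ) :
    latticeGauge (u + v) ≤ latticeGauge u + latticeGauge v := by
  simp only [latticeGauge, Prod.fst_add, Prod.snd_add]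
  omega

lemma latticeGauge_eq_three_mul_stepCost {s : ℤ × ℤ} (hs : IsStep s) :
    (latticeGauge s : ℝ) = 3 * stepCost s := by
  rcases hs with h | h <;> simp only [fwdSteps, List.mem_cons, List.not_mem_nil, or_false,
    neg_eq_iff_eq_neg] at h <;> rcases h with rfl | rfl | rfl <;>
    norm_num [latticeGauge, stepCost, fwdSteps]

lemma latticeGauge_sum_le_pathLen (l : List (ℤ × ℤ)) (hl : ∀ s ∈ l, IsStep s) :
    (latticeGauge l.sum : ℝ) ≤ 3 * pathLen l :=
  calc (latticeGauge l.sum : ℝ)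
      ≤ (l.map fun s ↦ (latticeGauge s : ℝ)).sum :=
        List.le_sum_of_subadditive (fun s ↦ (latticeGauge s : ℝ)) (by simp [latticeGauge_zero])
          (fun u v ↦ by exact_mod_cast latticeGauge_add_le u v) l
    _ = (l.map fun s ↦ 3 * stepCost s).sum :=
        congrArg List.sum <| List.map_congr_left fun s hs ↦
          latticeGauge_eq_three_mul_stepCost (hl s hs)
    _ = 3 * pathLen l := List.sum_map_mul_left ..

def fwdPath (i j k : ℕ) : List (ℤ × ℤ) :=
  List.replicate i (1, 0) ++ List.replicate j (0, 1) ++ List.replicate k (-1, -1)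

lemma pathLen_eq_length_div_three {l : List (ℤ × ℤ)} (hl : ∀ s ∈ l, s ∈ fwdSteps) :
    pathLen l = l.length / 3 := by
  rw [pathLen, List.map_congr_left (f := stepCost) (g := fun _ ↦ 1 / 3)
    fun s hs ↦ if_pos (hl s hs), List.map_const', List.sum_replicate, nsmul_eq_mul, mul_one_div]

lemma mem_fwdSteps_of_mem_fwdPath {i j k : ℕ} {s : ℤ × ℤ} (hs : s ∈ fwdPath i j k) :
    s ∈ fwdSteps := by
  simp only [fwdPath, List.mem_append, List.mem_replicate] at hs
  rcases hs with (⟨_, rfl⟩ | ⟨_, rfl⟩) | ⟨_, rfl⟩ <;> simp [fwdSteps]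

lemma sum_fwdPath (i j k : ℕ) : (fwdPath i j k).sum = ((i : ℤ) - k, (j : ℤ) - k) := by
  simp only [fwdPath, List.sum_append, List.sum_replicate, Prod.smul_mk, Prod.mk_add_mk,
    nsmul_eq_mul]
  ext <;> ring

lemma pathLen_fwdPath (i j k : ℕ) : pathLen (fwdPath i j k) = ((i + j + k : ℕ) : ℝ) / 3 := by
  rw [pathLen_eq_length_div_three fun _ ↦ mem_fwdSteps_of_mem_fwdPath]
  simp [fwdPath, add_assoc]

lemma exists_fwdPath_sum_eq (v : ℤ × ℤ) :
    ∃ i j k : ℕ, ((i : ℤ) - k, (j : ℤ) - k) = v ∧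
      ((i + j + k : ℕ) : ℤ) = latticeGauge v := by
  set k := max 0 (max (-v.1) (-v.2))
  refine ⟨(v.1 + k).toNat, (v.2 + k).toNat, k.toNat, ?_, ?_⟩
  · ext <;> simp only <;> omega
  · simp only [latticeGauge]
    omega

lemma isLeast_pathLengths (a b : ℤ × ℤ) :
    IsLeast (pathLengths a b) ((latticeGauge (b - a) : ℝ) / 3) := by
  constructor
  · obtain ⟨i, j, k, hsum, hlen⟩ := exists_fwdPath_sum_eq (b - a)
    refine ⟨fwdPath i j k, fun _ hs ↦ Or.inl (mem_fwdSteps_of_mem_fwdPath hs), ?_, ?_⟩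
    · rw [sum_fwdPath, hsum, add_sub_cancel]
    · rw [pathLen_fwdPath, ← hlen, Int.cast_natCast]
  · rintro _ ⟨l, hl, rfl, rfl⟩
    have := latticeGauge_sum_le_pathLen l hl
    rw [add_sub_cancel_left]
    linarith

lemma latticeDist_eq (a b : ℤ × ℤ) : latticeDist a b = (latticeGauge (b - a) : ℝ) / 3 :=
  (isLeast_pathLengths a b).csInf_eq

section Tripod

variable (a b c x : ℤ × ℤ)

lemma tripod_le_latticeGauge_sum :
    -a.1 - a.2 + 2 * b.1 - b.2 - c.1 + 2 * c.2 ≤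
      latticeGauge (x - a) + latticeGauge (x - b) + latticeGauge (x - c) := by
  simp only [latticeGauge, Prod.fst_sub, Prod.snd_sub]
  omega

lemma latticeGauge_sum_eq_tripod_iff :
    latticeGauge (x - a) + latticeGauge (x - b) + latticeGauge (x - c) =
        -a.1 - a.2 + 2 * b.1 - b.2 - c.1 + 2 * c.2 ↔
      a.1 ≤ x.1 ∧ x.1 ≤ b.1 ∧ a.2 ≤ x.2 ∧ x.2 ≤ c.2 ∧
        b.2 - b.1 ≤ x.2 - x.1 ∧ x.2 - x.1 ≤ c.2 - c.1 := by
  simp only [latticeGauge, Prod.fst_sub, Prod.snd_sub]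
  omega

end Tripod

theorem lattice_dist_tripod_general (a1 a2 b1 b2 c1 c2 : ℤ) :
    ∀ X : ℤ × ℤ,
      (((-a1 - a2 + 2 * b1 - b2 - c1 + 2 * c2 : ℤ) : ℝ) / 3 ≤
        latticeDist (a1, a2) X + latticeDist (b1, b2) X + latticeDist (c1, c2) X) ∧
      (latticeDist (a1, a2) X + latticeDist (b1, b2) X + latticeDist (c1, c2) X =
          ((-a1 - a2 + 2 * b1 - b2 - c1 + 2 * c2 : ℤ) : ℝ) / 3 ↔
        (a1 ≤ X.1 ∧ X.1 ≤ b1 ∧ a2 ≤ X.2 ∧ X.2 ≤ c2 ∧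
          b2 - b1 ≤ X.2 - X.1 ∧ X.2 - X.1 ≤ c2 - c1)) := by
  intro X
  have hsum : latticeDist (a1, a2) X + latticeDist (b1, b2) X + latticeDist (c1, c2) X =
      ((latticeGauge (X - (a1, a2)) + latticeGauge (X - (b1, b2)) +
        latticeGauge (X - (c1, c2)) : ℤ) : ℝ) / 3 := by
    simp only [latticeDist_eq]
    push_cast
    ring
  rw [hsum, div_le_div_iff_of_pos_right (by norm_num), div_left_inj' (by norm_num),
    Int.cast_le, Int.cast_inj]
  exact ⟨tripod_le_latticeGauge_sum (a1, a2) (b1, b2) (c1, c2) X,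
    latticeGauge_sum_eq_tripod_iff (a1, a2) (b1, b2) (c1, c2) X⟩

/-- if the region `Ω` determined by `A, B, C` is nonempty, then for every
`X ∈ ℤ²` we have `d(A,X) + d(B,X) + d(C,X) ≥ (-a1-a2+2b1-b2-c1+2c2)/3`, with equality
exactly when `X ∈ Ω`. -/
theorem lattice_dist_tripod (a1 a2 b1 b2 c1 c2 : ℤ)
    (hΩ : ∃ x y : ℤ, a1 ≤ x ∧ x ≤ b1 ∧ a2 ≤ y ∧ y ≤ c2 ∧
      b2 - b1 ≤ y - x ∧ y - x ≤ c2 - c1) :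
    ∀ X : ℤ × ℤ,
      (((-a1 - a2 + 2 * b1 - b2 - c1 + 2 * c2 : ℤ) : ℝ) / 3 ≤
        latticeDist (a1, a2) X + latticeDist (b1, b2) X + latticeDist (c1, c2) X) ∧
      (latticeDist (a1, a2) X + latticeDist (b1, b2) X + latticeDist (c1, c2) X =
          ((-a1 - a2 + 2 * b1 - b2 - c1 + 2 * c2 : ℤ) : ℝ) / 3 ↔
        (a1 ≤ X.1 ∧ X.1 ≤ b1 ∧ a2 ≤ X.2 ∧ X.2 ≤ c2 ∧
          b2 - b1 ≤ X.2 - X.1 ∧ X.2 - X.1 ≤ c2 - c1)) :=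
  lattice_dist_tripod_general a1 a2 b1 b2 c1 c2
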